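/- arXiv:2208.03394 — 6 statements merged into one kernel-verified Lean document; each statement's English description precedes it below -/
import Mathlib

section
/- On the span of polynomials, for every n ≥ 1, (IR₀)ⁿ = ∑_{k=1}ⁿ Λ_{k,n} Iᵏ R₀ᵏ, where the diagonal operators Λ_{k,n} satisfy the recurrence Λ_{k,n} = Λ_{k−1,n−1} + (∑_{l=1}^k D₀^{(l)}) Λ_{k,n−1} with Λ_{n,n} = id, Λ_{0,n} = 0, and Λ_{k,n} = 0 for other out-of-range indices, and D₀ = [R₀, I]. -/
/-- Backward shift `R₀` on coefficient sequences. -/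
def backShift (f : ℕ → ℂ) : ℕ → ℂ := fun k => f (k + 1)

/-- Integration operator `I` on coefficient sequences: `I zⁿ = z^{n+1}/(n+1)`. -/
noncomputable def intOp (f : ℕ → ℂ) : ℕ → ℂ :=
  fun k => if k = 0 then 0 else f (k - 1) / (k : ℂ)

/-- Diagonal entries of `D₀ = [R₀, I] = diag(1, −1/2, −1/6, …, −1/(n(n+1)), …)`. -/
noncomputable def d0 : ℕ → ℂ := fun m => if m = 0 then 1 else -(1 / ((m : ℂ) * ((m : ℂ) + 1)))

/-- Entries of the `j`-fold forward diagonal shift `D^{(j)}`. -/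
def fwdShiftK (d : ℕ → ℂ) (j : ℕ) : ℕ → ℂ := fun m => if m < j then 0 else d (m - j)

/-!
On coefficient sequences `IR₀` is the diagonal operator `zᵐ ↦ zᵐ/m` and `IᵏR₀ᵏ` is the diagonal
operator `zᵐ ↦ zᵐ (m-k)!/m!`, so the identity is one of scalars for each `m`:
`m⁻ⁿ = ∑ₖ Λ_{k,n}(m) / m^{(k)}` with `m^{(k)}` the falling factorial. The sum
`∑_{l=1}^k D₀^{(l)}` telescopes to `1/m - 1/(m-k)`, which gives
`1/m^{(k+1)} + (1/m - 1/(m-k))/m^{(k)} = m⁻¹/m^{(k)}`; feeding this into the recurrence for `Λ`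
multiplies the sum by `m⁻¹` at each step.
-/

open Finset

theorem Finset.sum_Icc_one_eq_sum_range {M : Type*} [AddCommMonoid M] (F : ℕ → M) (n : ℕ) :
    ∑ k ∈ Icc 1 n, F k = ∑ k ∈ range n, F (k + 1) := by
  induction n with
  | zero => simp
  | succ n ih => rw [sum_Icc_succ_top (by omega), ih, sum_range_succ]

theorem sum_Icc_mul_eq_of_recurrence {R : Type*} [CommSemiring R] {a b s w : ℕ → R} {c : R}
    {n : ℕ} (ha₀ : a 0 = 0) (ha_last : a (n + 1) = 0)
    (hb : ∀ k ∈ Icc 1 (n + 1), b k = a (k - 1) + s k * a k)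
    (hw : ∀ k, w (k + 1) + s k * w k = c * w k) :
    ∑ k ∈ Icc 1 (n + 1), b k * w k = c * ∑ k ∈ Icc 1 n, a k * w k := by
  rw [sum_Icc_one_eq_sum_range, sum_Icc_one_eq_sum_range, mul_sum]
  calc ∑ k ∈ range (n + 1), b (k + 1) * w (k + 1)
      = ∑ k ∈ range (n + 1), a k * w (k + 1)
          + ∑ k ∈ range (n + 1), s (k + 1) * a (k + 1) * w (k + 1) := by
        rw [← sum_add_distrib]
        refine sum_congr rfl fun k hk => ?_
        rw [hb (k + 1) (by simp at hk ⊢; omega), Nat.add_sub_cancel]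
        ring
    _ = ∑ k ∈ range n, a (k + 1) * w (k + 1 + 1)
          + ∑ k ∈ range n, s (k + 1) * a (k + 1) * w (k + 1) := by
        rw [sum_range_succ', sum_range_succ _ n, ha₀, ha_last]
        simp
    _ = ∑ k ∈ range n, c * (a (k + 1) * w (k + 1)) := by
        rw [← sum_add_distrib]
        refine sum_congr rfl fun k _ => ?_
        rw [mul_left_comm c, ← hw (k + 1)]
        ring

theorem intOp_backShift (g : ℕ → ℂ) : intOp (backShift g) = fun m => g m / m := by
  funext m
  rcases m with _ | m
  · simp [intOp]
  · simp [intOp, backShift]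

theorem iterate_intOp_backShift (n : ℕ) (f : ℕ → ℂ) :
    (fun g => intOp (backShift g))^[n] f = fun m => f m / (m : ℂ) ^ n := by
  induction n with
  | zero => simp
  | succ n ih =>
    rw [Function.iterate_succ_apply', ih, intOp_backShift]
    simp only [div_div, pow_succ]

-- `Nat.descFactorial m k = 0` for `m < k`, and then `f m / 0 = 0` is the correct value.
theorem iterate_intOp_iterate_backShift (k : ℕ) (f : ℕ → ℂ) :
    intOp^[k] (backShift^[k] f) = fun m => f m / m.descFactorial k := by
  induction k generalizing f with
  | zero => simp
  | succ k ih =>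
    rw [Function.iterate_succ_apply (f := backShift), Function.iterate_succ_apply' (f := intOp), ih]
    funext m
    rcases m with _ | m
    · simp [intOp]
    · simp only [intOp, backShift, Nat.add_one_ne_zero, if_false, Nat.add_sub_cancel,
        Nat.succ_descFactorial_succ, Nat.cast_mul, div_div, mul_comm]

theorem d0_eq_inv_sub_inv (j : ℕ) : d0 j = ((j : ℂ) + 1)⁻¹ - (j : ℂ)⁻¹ := by
  rcases j with _ | j
  · simp [d0]
  · have hj : (j : ℂ) + 1 ≠ 0 := Nat.cast_add_one_ne_zero j
    have hj' : (j : ℂ) + 1 + 1 ≠ 0 := by exact_mod_cast Nat.add_one_ne_zero (j + 1)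
    simp only [d0, Nat.add_one_ne_zero, if_false]
    push_cast
    field_simp
    ring

-- The truncated subtraction `m - l` and `(0 : ℂ)⁻¹ = 0` make this hold also for `m ≤ l`.
theorem fwdShiftK_d0_succ (l m : ℕ) :
    fwdShiftK d0 (l + 1) m = ((m - l : ℕ) : ℂ)⁻¹ - ((m - (l + 1) : ℕ) : ℂ)⁻¹ := by
  unfold fwdShiftK
  split_ifs with h
  · rw [Nat.sub_eq_zero_of_le (by omega : m ≤ l), Nat.sub_eq_zero_of_le h.le]
    simp
  · rw [d0_eq_inv_sub_inv, show m - l = m - (l + 1) + 1 by omega]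
    push_cast
    ring

theorem sum_fwdShiftK_d0 (k m : ℕ) :
    ∑ l ∈ Icc 1 k, fwdShiftK d0 l m = (m : ℂ)⁻¹ - ((m - k : ℕ) : ℂ)⁻¹ := by
  induction k with
  | zero => simp
  | succ k ih => rw [sum_Icc_succ_top (by omega), ih, fwdShiftK_d0_succ]; ring

theorem inv_descFactorial_succ_add_sum_fwdShiftK_d0_mul (k m : ℕ) :
    ((m.descFactorial (k + 1) : ℂ))⁻¹
        + (∑ l ∈ Icc 1 k, fwdShiftK d0 l m) * ((m.descFactorial k : ℂ))⁻¹
      = (m : ℂ)⁻¹ * ((m.descFactorial k : ℂ))⁻¹ := by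
  rw [sum_fwdShiftK_d0, Nat.descFactorial_succ, Nat.cast_mul, mul_inv]
  ring

theorem sum_Icc_mul_inv_descFactorial (Λ : ℕ → ℕ → ℕ → ℂ)
    (hdiagid : ∀ n : ℕ, 1 ≤ n → Λ n n = fun _ => 1)
    (hzero : ∀ n : ℕ, 1 ≤ n → Λ 0 n = fun _ => 0)
    (hout : ∀ k n : ℕ, n < k → Λ k n = fun _ => 0)
    (hrec : ∀ k n : ℕ, 1 ≤ k → k < n → Λ k n = fun m =>
      Λ (k - 1) (n - 1) m + (∑ l ∈ Icc 1 k, fwdShiftK d0 l m) * Λ k (n - 1) m)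
    (m n : ℕ) (hn : 1 ≤ n) :
    ∑ k ∈ Icc 1 n, Λ k n m * ((m.descFactorial k : ℂ))⁻¹ = ((m : ℂ) ^ n)⁻¹ := by
  induction n, hn using Nat.le_induction with
  | base => simp [hdiagid 1 le_rfl]
  | succ n hn ih =>
    rw [sum_Icc_mul_eq_of_recurrence (a := fun k => Λ k n m) (b := fun k => Λ k (n + 1) m)
      (congrFun (hzero n hn) m)
      (congrFun (hout (n + 1) n n.lt_succ_self) m) ?_
      (inv_descFactorial_succ_add_sum_fwdShiftK_d0_mul · m), ih, pow_succ, mul_inv, mul_comm]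
    intro k hk
    obtain ⟨hk₁, hk₂⟩ := mem_Icc.mp hk
    rcases hk₂.lt_or_eq with hlt | rfl
    · simp [hrec k (n + 1) hk₁ hlt]
    -- at `k = n + 1` the recurrence still holds, as `1 = 1 + S · 0`
    · simp [hdiagid n hn, hdiagid (n + 1) (by omega), hout (n + 1) n (by omega)]

/-- `(IR₀)ⁿ = ∑_{k=1}ⁿ Λ_{k,n} Iᵏ R₀ᵏ` where the diagonal operators `Λ_{k,n}` satisfy
`Λ_{k,n} = Λ_{k−1,n−1} + (∑_{l=1}^k D₀^{(l)}) Λ_{k,n−1}`, with `Λ_{n,n} = id`,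
`Λ_{0,n} = 0` and `Λ_{k,n} = 0` out of range. -/
theorem stmt11 (Λ : ℕ → ℕ → ℕ → ℂ)
    (hdiagid : ∀ n : ℕ, 1 ≤ n → Λ n n = fun _ => 1)
    (hzero : ∀ n : ℕ, 1 ≤ n → Λ 0 n = fun _ => 0)
    (hout : ∀ k n : ℕ, n < k → Λ k n = fun _ => 0)
    (hrec : ∀ k n : ℕ, 1 ≤ k → k < n → Λ k n = fun m =>
      Λ (k - 1) (n - 1) m + (∑ l ∈ Finset.Icc 1 k, fwdShiftK d0 l m) * Λ k (n - 1) m)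
    (n : ℕ) (hn : 1 ≤ n) (f : ℕ → ℂ) :
    (fun g => intOp (backShift g))^[n] f
      = fun m => ∑ k ∈ Finset.Icc 1 n, Λ k n m * (intOp^[k] (backShift^[k] f)) m := by
  funext m
  simp only [iterate_intOp_backShift, iterate_intOp_iterate_backShift]
  rw [div_eq_mul_inv, ← sum_Icc_mul_inv_descFactorial Λ hdiagid hzero hout hrec m n hn, mul_sum]
  refine sum_congr rfl fun k _ => ?_
  ring
end

section
/- The diagonal operators Λ_{k,n} in the expansion (IR₀)ⁿ = ∑_{k=1}ⁿ Λ_{k,n} Iᵏ R₀ᵏ admit the closed form Λ_{k,n} = ∑_{|α|=n−k} ∏_{t=1}^k (∑_{l=1}^t D₀^{(l)})^{α_t}, where the sum runs over multi-indices α = (α₁,…,α_k) of non-negative integers with α₁+⋯+α_k = n−k. -/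
/-!
The right-hand side is the complete homogeneous symmetric polynomial `h_{n-k}(x₁, …, xₖ)` in
`x_t = ∑_{l ≤ t} D₀^{(l)}`. Splitting off the exponent of the last variable gives
`h_{d+1}(x₁, …, xₖ) = h_{d+1}(x₁, …, x_{k-1}) + xₖ h_d(x₁, …, xₖ)`, which is the recurrence of
`Λ_{k,n}` with `d = n - k`; the boundary values agree too, so the two coincide by induction.
-/

open Finset

theorem Finset.Nat.sum_antidiagonalTuple_succ {M : Type*} [AddCommMonoid M] (k n : ℕ)
    (f : (Fin (k + 1) → ℕ) → M) :
    ∑ α ∈ antidiagonalTuple (k + 1) n, f α =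
      ∑ p ∈ antidiagonal n, ∑ α ∈ antidiagonalTuple k p.1, f (Fin.snoc α p.2) := by
  rw [sum_sigma']
  refine (sum_nbij' (fun q => Fin.snoc q.2 q.1.2)
    (fun α => ⟨(n - α (Fin.last k), α (Fin.last k)), Fin.init α⟩) ?_ ?_ ?_ ?_ ?_).symm
  · rintro ⟨⟨i, j⟩, α⟩ hq
    simp_all [mem_antidiagonalTuple, Fin.sum_univ_castSucc]
  · intro α hα
    simp only [mem_antidiagonalTuple, Fin.sum_univ_castSucc] at hα
    simp only [mem_sigma, HasAntidiagonal.mem_antidiagonal, mem_antidiagonalTuple]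
    exact ⟨by omega, by simp [Fin.init, ← hα]⟩
  · rintro ⟨⟨i, j⟩, α⟩ hq
    simp only [mem_sigma, HasAntidiagonal.mem_antidiagonal] at hq
    simp [← hq.1]
  · intro α _
    exact Fin.snoc_init_self α
  · intro _ _
    rfl

section CompleteHomogeneous

variable {R : Type*} [CommSemiring R]

def completeHomogeneous {k : ℕ} (x : Fin k → R) (d : ℕ) : R :=
  ∑ α ∈ Nat.antidiagonalTuple k d, ∏ t, x t ^ α t

@[simp]
theorem completeHomogeneous_zero_right {k : ℕ} (x : Fin k → R) : completeHomogeneous x 0 = 1 := by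
  simp [completeHomogeneous, Nat.antidiagonalTuple_zero_right]

@[simp]
theorem completeHomogeneous_fin_zero_succ (x : Fin 0 → R) (d : ℕ) :
    completeHomogeneous x (d + 1) = 0 := by
  simp [completeHomogeneous]

theorem completeHomogeneous_succ_eq_sum_antidiagonal {k : ℕ} (x : Fin (k + 1) → R) (n : ℕ) :
    completeHomogeneous x n =
      ∑ p ∈ antidiagonal n, completeHomogeneous (Fin.init x) p.1 * x (Fin.last k) ^ p.2 := by
  simp only [completeHomogeneous, Nat.sum_antidiagonalTuple_succ, Fin.prod_univ_castSucc,
    Fin.snoc_castSucc, Fin.snoc_last, sum_mul]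
  rfl

theorem completeHomogeneous_succ_succ {k : ℕ} (x : Fin (k + 1) → R) (d : ℕ) :
    completeHomogeneous x (d + 1) =
      completeHomogeneous (Fin.init x) (d + 1) + x (Fin.last k) * completeHomogeneous x d := by
  simp only [completeHomogeneous_succ_eq_sum_antidiagonal x, Nat.sum_antidiagonal_succ', pow_zero,
    mul_one, mul_sum, pow_succ]
  congr 1
  exact sum_congr rfl fun _ _ => by ring

theorem eq_completeHomogeneous_of_recurrence (S : ℕ → R) (L : ℕ → ℕ → R)
    (hdiag : ∀ n, 1 ≤ n → L n n = 1) (hzero : ∀ n, 1 ≤ n → L 0 n = 0)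
    (hrec : ∀ k n, 1 ≤ k → k < n → L k n = L (k - 1) (n - 1) + S k * L k (n - 1))
    (d k : ℕ) (hkd : 1 ≤ k + d) :
    L k (k + d) = completeHomogeneous (fun t : Fin k => S (t + 1)) d := by
  induction d generalizing k with
  | zero => simpa using hdiag k hkd
  | succ d ihd =>
    induction k with
    | zero => simpa using hzero (d + 1) le_add_self
    | succ k ihk =>
      rw [hrec (k + 1) _ le_add_self (by omega), completeHomogeneous_succ_succ, Nat.add_sub_cancel,
        show k + 1 + (d + 1) - 1 = k + (d + 1) by omega, ihk (by omega),
        show k + (d + 1) = k + 1 + d by omega, ihd (k + 1) (by omega)]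
      rfl

end CompleteHomogeneous

theorem stmt12_general (Λ : ℕ → ℕ → ℕ → ℂ)
    (hdiagid : ∀ n : ℕ, 1 ≤ n → Λ n n = fun _ => 1)
    (hzero : ∀ n : ℕ, 1 ≤ n → Λ 0 n = fun _ => 0)
    (hrec : ∀ k n : ℕ, 1 ≤ k → k < n → Λ k n = fun m =>
      Λ (k - 1) (n - 1) m + (∑ l ∈ Finset.Icc 1 k, fwdShiftK d0 l m) * Λ k (n - 1) m)
    (k n : ℕ) (hk : 1 ≤ k) (hkn : k ≤ n) (m : ℕ) :
    Λ k n m = ∑ α ∈ Finset.Nat.antidiagonalTuple k (n - k),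
      ∏ t : Fin k, (∑ l ∈ Finset.Icc 1 (t.val + 1), fwdShiftK d0 l m) ^ (α t) := by
  obtain ⟨d, rfl⟩ := Nat.exists_eq_add_of_le hkn
  rw [Nat.add_sub_cancel_left]
  exact eq_completeHomogeneous_of_recurrence (fun j => ∑ l ∈ Icc 1 j, fwdShiftK d0 l m)
    (fun k n => Λ k n m) (fun n hn => congrFun (hdiagid n hn) m)
    (fun n hn => congrFun (hzero n hn) m) (fun k n hk hkn => congrFun (hrec k n hk hkn) m)
    d k (by omega)

/-- Closed form for the coefficients `Λ_{k,n}` of the expansion `(IR₀)ⁿ = ∑ Λ_{k,n}IᵏR₀ᵏ`: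
`Λ_{k,n} = ∑_{|α|=n−k} ∏_{t=1}^k (∑_{l=1}^t D₀^{(l)})^{α_t}`, the sum being over
multi-indices `α = (α₁,…,α_k)` of non-negative integers with `α₁+⋯+α_k = n−k`. -/
theorem stmt12 (Λ : ℕ → ℕ → ℕ → ℂ)
    (hdiagid : ∀ n : ℕ, 1 ≤ n → Λ n n = fun _ => 1)
    (hzero : ∀ n : ℕ, 1 ≤ n → Λ 0 n = fun _ => 0)
    (hout : ∀ k n : ℕ, n < k → Λ k n = fun _ => 0)
    (hrec : ∀ k n : ℕ, 1 ≤ k → k < n → Λ k n = fun m =>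
      Λ (k - 1) (n - 1) m + (∑ l ∈ Finset.Icc 1 k, fwdShiftK d0 l m) * Λ k (n - 1) m)
    (k n : ℕ) (hk : 1 ≤ k) (hkn : k ≤ n) (m : ℕ) :
    Λ k n m = ∑ α ∈ Finset.Nat.antidiagonalTuple k (n - k),
      ∏ t : Fin k, (∑ l ∈ Finset.Icc 1 (t.val + 1), fwdShiftK d0 l m) ^ (α t) :=
  stmt12_general Λ hdiagid hzero hrec k n hk hkn m
end

section
/- With Λ₂,₂ = id, one has (IR₀)² = I²R₀² + D₀^{(1)} IR₀ on the span of polynomials, where D₀^{(1)} is the forward shift of D₀ = [R₀, I]. -/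
/-- Diagonal operator. -/
def diagOp (d : ℕ → ℂ) (f : ℕ → ℂ) : ℕ → ℂ := fun k => d k * f k

/-- `(IR₀)² = I²R₀² + D₀^{(1)} IR₀` on the span of polynomials. -/
theorem stmt14 (f : ℕ → ℂ) :
    intOp (backShift (intOp (backShift f)))
      = intOp (intOp (backShift (backShift f)))
        + diagOp (fwdShiftK d0 1) (intOp (backShift f)) := by
  funext k
  match k with
  | 0 => simp [intOp, backShift, diagOp, fwdShiftK, d0]
  | 1 => simp [intOp, backShift, diagOp, fwdShiftK, d0]
  | (n+2) =>
    simp only [intOp, backShift, diagOp, fwdShiftK, d0, Pi.add_apply]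
    norm_num
    have h1 : ((n:ℂ)+1) ≠ 0 := Nat.cast_add_one_ne_zero n
    have h2 : ((n:ℂ)+2) ≠ 0 := by
      have : ((n+2:ℕ):ℂ) ≠ 0 := Nat.cast_ne_zero.mpr (by omega)
      push_cast at this; exact this
    have h2' : ((n:ℂ)+1+1) ≠ 0 := by rw [show ((n:ℂ)+1+1) = (n:ℂ)+2 by ring]; exact h2
    field_simp
    ring
end

section
/- On the span of polynomials, (IR₀)³ = I³R₀³ + (2D₀^{(1)} + D₀^{(2)}) I²R₀² + (D₀^{(1)})² IR₀. -/
/-! All operators involved act diagonally on coefficient sequences: `IR₀` divides the `k`-th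
coefficient by `k`, and `IʲR₀ʲ` divides it by the falling factorial `k (k-1) ⋯ (k-j+1)`.
The operator identity is therefore one scalar identity per coefficient, which for `k ≥ 3` is an
identity of rational functions in `k` and for `k ≤ 2` is checked by hand. -/

open Function

-- At `k = 0` both sides vanish because `x / 0 = 0`.
lemma intOp_backShift_apply (g : ℕ → ℂ) (k : ℕ) : intOp (backShift g) k = g k / k := by
  rcases k with _ | k
  · simp [intOp]
  · simp [intOp, backShift]

lemma iterate_intOp_comp_backShift_apply (j : ℕ) (g : ℕ → ℂ) (k : ℕ) :
    (fun g => intOp (backShift g))^[j] g k = g k / (k : ℂ) ^ j := by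
  induction j with
  | zero => simp
  | succ j ih => rw [iterate_succ_apply', intOp_backShift_apply, ih, div_div, pow_succ]

-- For `k < j` the falling factorial is `0`, and the junk value `x / 0 = 0` is the correct one.
lemma iterate_intOp_iterate_backShift_apply (j : ℕ) (f : ℕ → ℂ) (k : ℕ) :
    intOp^[j] (backShift^[j] f) k = f k / k.descFactorial j := by
  induction j generalizing f k with
  | zero => simp
  | succ j ih =>
    rw [iterate_succ_apply', iterate_succ_apply]
    rcases k with _ | k
    · simp [intOp]
    · rw [Nat.succ_descFactorial_succ]
      simp [intOp, ih, backShift, div_div, mul_comm]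

lemma inv_pow_three_expansion (k : ℕ) :
    ((k : ℂ) ^ 3)⁻¹ = ((k.descFactorial 3 : ℕ) : ℂ)⁻¹
      + (2 * fwdShiftK d0 1 k + fwdShiftK d0 2 k) * ((k.descFactorial 2 : ℕ) : ℂ)⁻¹
      + fwdShiftK d0 1 k ^ 2 * (k : ℂ)⁻¹ := by
  rcases k with _ | _ | _ | n
  · simp
  · simp [fwdShiftK, d0]
  · simp [fwdShiftK, d0, Nat.descFactorial]
    norm_num
  · have h1 : (n : ℂ) + 1 ≠ 0 := by norm_cast
    have h2 : (n : ℂ) + 2 ≠ 0 := by norm_cast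
    have h3 : (n : ℂ) + 3 ≠ 0 := by norm_cast
    simp only [fwdShiftK, d0, Nat.descFactorial, if_neg (by omega : ¬ n + 3 < 1),
      if_neg (by omega : ¬ n + 3 < 2), Nat.add_sub_cancel, Nat.add_one_ne_zero, if_false]
    push_cast
    rw [show (n : ℂ) + 1 + 1 = n + 2 by ring, show (n : ℂ) + 2 + 1 = n + 3 by ring]
    field_simp
    ring

/-- `(IR₀)³ = I³R₀³ + (2D₀^{(1)} + D₀^{(2)}) I²R₀² + (D₀^{(1)})² IR₀`. -/
theorem stmt15 (f : ℕ → ℂ) :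
    (fun g => intOp (backShift g))^[3] f
      = intOp^[3] (backShift^[3] f)
        + diagOp (fun m => 2 * fwdShiftK d0 1 m + fwdShiftK d0 2 m)
            (intOp^[2] (backShift^[2] f))
        + diagOp (fun m => (fwdShiftK d0 1 m) ^ 2) (intOp (backShift f)) := by
  funext k
  simp only [Pi.add_apply, diagOp, iterate_intOp_comp_backShift_apply,
    iterate_intOp_iterate_backShift_apply, intOp_backShift_apply]
  linear_combination f k * inv_pow_three_expansion k
end

section
/- Let A, B be weighted shifts on H(φ) as above and p ≥ 2. Then A* = (BA)^{p−1}B on the span of monomials if and only if conj(a_{n+1}) φₙ = bₙ^p a_{n+1}^{p−1} φ_{n+1} for all n ≥ 0. -/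
/-!
Monomials are orthogonal and `BA` acts diagonally on them, so `(BA)^{p−1}B zⁿ` is the multiple
`bₙ^p a_{n+1}^{p−1} z^{n+1}` of `z^{n+1}`, while `A* zⁿ` pairs only with `z^{n+1}`. Both sides of
`⟨(BA)^{p−1}B zⁿ, zᵐ⟩ = ⟨zⁿ, A zᵐ⟩` therefore vanish unless `m = n + 1`, where they are exactly
the two sides of the weight condition.
-/

/-- The `H(φ)` inner product on coefficient sequences. -/
noncomputable def innerPhi (φ : ℕ → ℝ) (f g : ℕ → ℂ) : ℂ :=
  ∑' k : ℕ, (φ k : ℂ) * f k * (starRingEnd ℂ) (g k)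

/-- Weighted backward shift `A zⁿ = aₙ z^{n−1}` (`A1 = 0`). -/
def wA (a : ℕ → ℂ) (f : ℕ → ℂ) : ℕ → ℂ := fun k => a (k + 1) * f (k + 1)

/-- Weighted forward shift `B zⁿ = bₙ z^{n+1}`. -/
def wB (b : ℕ → ℂ) (f : ℕ → ℂ) : ℕ → ℂ :=
  fun k => if k = 0 then 0 else b (k - 1) * f (k - 1)

/-- Coefficient sequence of the monomial `zⁿ`. -/
def mono (n : ℕ) : ℕ → ℂ := fun k => if k = n then 1 else 0

lemma mono_eq_single (n : ℕ) : mono n = Pi.single n 1 := by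
  funext k
  simp [mono, Pi.single_apply]

lemma innerPhi_single_left (φ : ℕ → ℝ) (j : ℕ) (c : ℂ) (g : ℕ → ℂ) :
    innerPhi φ (Pi.single j c) g = (φ j : ℂ) * c * starRingEnd ℂ (g j) := by
  rw [innerPhi, tsum_eq_single j fun k hk => by simp [hk]]
  simp

lemma wB_single (b : ℕ → ℂ) (n : ℕ) (c : ℂ) :
    wB b (Pi.single n c) = Pi.single (n + 1) (b n * c) := by
  funext k
  rcases k with _ | k
  · simp [wB]
  · by_cases hk : k = n <;> simp [wB, hk]

lemma wA_single_succ (a : ℕ → ℂ) (n : ℕ) (c : ℂ) :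
    wA a (Pi.single (n + 1) c) = Pi.single n (a (n + 1) * c) := by
  funext k
  by_cases hk : k = n <;> simp [wA, hk]

lemma iterate_wB_wA_single_succ (a b : ℕ → ℂ) (n j : ℕ) (c : ℂ) :
    (fun f => wB b (wA a f))^[j] (Pi.single (n + 1) c)
      = Pi.single (n + 1) ((b n * a (n + 1)) ^ j * c) := by
  induction j with
  | zero => simp
  | succ j ih =>
    rw [Function.iterate_succ_apply', ih, wA_single_succ, wB_single, pow_succ]
    ring_nf

theorem stmt17_general (φ : ℕ → ℝ) (a b : ℕ → ℂ) (p : ℕ) (hp : 2 ≤ p) :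
    (∀ n m : ℕ,
        innerPhi φ ((fun f => wB b (wA a f))^[p - 1] (wB b (mono n))) (mono m)
          = innerPhi φ (mono n) (wA a (mono m)))
      ↔ ∀ n : ℕ, (starRingEnd ℂ) (a (n + 1)) * (φ n : ℂ)
          = (b n) ^ p * (a (n + 1)) ^ (p - 1) * (φ (n + 1) : ℂ) := by
  have hpow (n : ℕ) : (b n * a (n + 1)) ^ (p - 1) * (b n * 1) = b n ^ p * a (n + 1) ^ (p - 1) := by
    rw [← Nat.sub_add_cancel (by omega : 1 ≤ p)]
    simp only [Nat.add_sub_cancel]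
    ring
  simp only [mono_eq_single, wB_single, iterate_wB_wA_single_succ, innerPhi_single_left, wA, hpow]
  constructor
  · intro H n
    have hdiag := H n (n + 1)
    simp only [Pi.single_eq_same, map_one, mul_one] at hdiag
    linear_combination -hdiag
  · intro H n m
    rcases eq_or_ne m (n + 1) with rfl | hm
    · simp only [Pi.single_eq_same, map_one, mul_one]
      linear_combination -H n
    · simp [hm.symm]

/-- For `p ≥ 2`: `A* = (BA)^{p−1}B` on the span of monomials iff
`conj(a_{n+1}) φₙ = bₙ^p a_{n+1}^{p−1} φ_{n+1}` for all `n`. -/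
theorem stmt17 (φ : ℕ → ℝ) (hφ : ∀ n, 0 < φ n) (a b : ℕ → ℂ) (p : ℕ) (hp : 2 ≤ p) :
    (∀ n m : ℕ,
        innerPhi φ ((fun f => wB b (wA a f))^[p - 1] (wB b (mono n))) (mono m)
          = innerPhi φ (mono n) (wA a (mono m)))
      ↔ ∀ n : ℕ, (starRingEnd ℂ) (a (n + 1)) * (φ n : ℂ)
          = (b n) ^ p * (a (n + 1)) ^ (p - 1) * (φ (n + 1) : ℂ) :=
  stmt17_general φ a b p hp
end

section
/- Let A, B be weighted shifts on H(φ) and p ≥ 2. Then B* = (AB)^{p−1}A on the span of monomials if and only if conj(b_{n−1}) φₙ = aₙ^p b_{n−1}^{p−1} φ_{n−1} for all n ≥ 1. -/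
lemma iterAB (a b : ℕ → ℂ) (k : ℕ) (f : ℕ → ℂ) :
    (fun f => wA a (wB b f))^[k] f = fun j => (a (j+1) * b j)^k * f j := by
  induction k with
  | zero => simp
  | succ k ih =>
    rw [Function.iterate_succ_apply', ih]
    funext j
    simp only [wA, wB, pow_succ]
    simp
    ring

lemma innerL (φ : ℕ → ℝ) (f : ℕ → ℂ) (m : ℕ) :
    innerPhi φ f (mono m) = (φ m : ℂ) * f m := by
  unfold innerPhi
  rw [tsum_eq_single m]
  · simp [mono]
  · intro k hk
    simp [mono, hk]

lemma innerR (φ : ℕ → ℝ) (g : ℕ → ℂ) (n : ℕ) :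
    innerPhi φ (mono n) g = (φ n : ℂ) * (starRingEnd ℂ) (g n) := by
  unfold innerPhi
  rw [tsum_eq_single n]
  · simp [mono]
  · intro k hk
    simp [mono, hk]

/-- For `p ≥ 2`: `B* = (AB)^{p−1}A` on the span of monomials iff
`conj(b_{n−1}) φₙ = aₙ^p b_{n−1}^{p−1} φ_{n−1}` for all `n ≥ 1`. -/
theorem stmt18 (φ : ℕ → ℝ) (hφ : ∀ n, 0 < φ n) (a b : ℕ → ℂ) (p : ℕ) (hp : 2 ≤ p) :
    (∀ n m : ℕ,
        innerPhi φ ((fun f => wA a (wB b f))^[p - 1] (wA a (mono n))) (mono m)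
          = innerPhi φ (mono n) (wB b (mono m)))
      ↔ ∀ n : ℕ, 1 ≤ n → (starRingEnd ℂ) (b (n - 1)) * (φ n : ℂ)
          = (a n) ^ p * (b (n - 1)) ^ (p - 1) * (φ (n - 1) : ℂ) := by
  obtain ⟨q, rfl⟩ : ∃ q, p = q + 2 := ⟨p - 2, by omega⟩
  simp only [show q + 2 - 1 = q + 1 from rfl]
  constructor
  · intro h n hn
    have := h n (n - 1)
    rw [iterAB, innerL, innerR] at this
    simp only [wA, wB, mono, Nat.sub_add_cancel hn] at this
    rw [if_neg (show ¬ n = 0 by omega)] at this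
    simp only [if_true, mul_one] at this
    linear_combination -this
  · intro h n m
    rw [iterAB, innerL, innerR]
    by_cases hn : n = m + 1
    · subst hn
      have := h (m + 1) (by omega)
      simp only [Nat.add_sub_cancel] at this
      simp only [wA, wB, mono, Nat.add_sub_cancel]
      rw [if_neg (Nat.succ_ne_zero m)]
      simp only [if_true, mul_one]
      linear_combination -this
    · simp only [wA, wB, mono]
      rw [if_neg (by omega)]
      by_cases h0 : n = 0
      · subst h0; simp
      · rw [if_neg h0, if_neg (by omega)]
        simp
end
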